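/- Fix n, a bandwidth b > 0, a penalty level λ > 0, weights ŵ_1,…,ŵ_p and constants 0 < w^{(l)} ≤ 1 ≤ w^{(u)} with w^{(l)} ≤ ŵ_k ≤ w^{(u)} for all k ≤ p. Let (θ̃,γ̃) ∈ ℝ^4×ℝ^p minimize (θ,γ) ↦ (1/n)Σ_{i=1}^n K_b(X_i)(Y_i − V_i^⊤θ − Z_i^⊤γ)² + λΣ_{k=1}^p ŵ_k|γ_k|. Let J ⊆ {1,…,p}, let (θ₀,γ₀) be any pair with γ₀ supported on J, and set r_i = Y_i − V_i^⊤θ₀ − Z_i^⊤γ₀. Suppose 2‖(1/n)𝐕^⊤𝐊_b𝐫‖_∞ ≤ λ/2, 2·max_{k≤p} |(1/n)Σ_{i=1}^n ŵ_k^{−1}K_b(X_i)Z_i^{(k)}r_i| ≤ λ/2, and that the compatibility constant k(w̄,J) with w̄ = 3w^{(u)}/w^{(l)} is strictly positive. Then (1/n)‖𝐊_b^{1/2}( 𝐕(θ₀−θ̃) + 𝐙(γ₀−γ̃) )‖₂² + w^{(l)}λ‖(θ₀−θ̃, γ₀−γ̃)‖₁ ≤ 4λ²|J|(w^{(u)})²/k(w̄,J).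 -/

import Mathlib

open MeasureTheory Finset

noncomputable section
open scoped Classical

/-- Indicator `1{x ≥ 0}`. -/
def indPos (x : ℝ) : ℝ := if 0 ≤ x then 1 else 0

/-- The RD design vector `V = (1, 1{x≥0}, x/b, 1{x≥0}·x/b)`. -/
def Vvec (b x : ℝ) : Fin 4 → ℝ := ![1, indPos x, x / b, indPos x * (x / b)]

/-- Kernel weight `K_b(x) = K(x/b)/b`. -/
def Kb (K : ℝ → ℝ) (b x : ℝ) : ℝ := K (x / b) / b

set_option maxHeartbeats 1000000 in
/-- the basic inequality for the localized, weighted, partially penalized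
Lasso (Lemma on the regression error of the Lasso), on the event where the kernel-weighted
correlations of the residuals with the regressors are dominated by the penalty level. -/
theorem localized_lasso_basic_inequality
    (n p : ℕ) (hn : 0 < n) (b : ℝ) (hb : 0 < b)
    (K : ℝ → ℝ) (hK : ∀ u, 0 ≤ K u)
    (X Y : Fin n → ℝ) (Z : Fin n → Fin p → ℝ)
    (lam : ℝ) (hlam : 0 < lam)
    (w : Fin p → ℝ) (wl wu : ℝ)
    (hwl : 0 < wl) (hwl1 : wl ≤ 1) (hwu : 1 ≤ wu)
    (hw : ∀ k, wl ≤ w k ∧ w k ≤ wu)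
    -- the Lasso estimator
    (θt : Fin 4 → ℝ) (γt : Fin p → ℝ)
    (hmin : ∀ (θ : Fin 4 → ℝ) (γ : Fin p → ℝ),
      (1 / (n : ℝ)) * (∑ i, Kb K b (X i) *
          (Y i - (∑ a, Vvec b (X i) a * θt a) - ∑ k, Z i k * γt k) ^ 2) +
        lam * ∑ k, w k * |γt k| ≤
      (1 / (n : ℝ)) * (∑ i, Kb K b (X i) *
          (Y i - (∑ a, Vvec b (X i) a * θ a) - ∑ k, Z i k * γ k) ^ 2) +
        lam * ∑ k, w k * |γ k|)
    -- reference pair and residuals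
    (J : Finset (Fin p)) (θ₀ : Fin 4 → ℝ) (γ₀ : Fin p → ℝ)
    (hsupp : ∀ k ∉ J, γ₀ k = 0)
    (r : Fin n → ℝ)
    (hr : ∀ i, r i = Y i - (∑ a, Vvec b (X i) a * θ₀ a) - ∑ k, Z i k * γ₀ k)
    -- the "good event" conditions
    (hV : ∀ a : Fin 4, 2 * |(1 / (n : ℝ)) * ∑ i, Vvec b (X i) a * Kb K b (X i) * r i| ≤ lam / 2)
    (hZ : ∀ k : Fin p, 2 * |(1 / (n : ℝ)) * ∑ i, (w k)⁻¹ * Kb K b (X i) * Z i k * r i| ≤ lam / 2)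
    -- the compatibility constant k(w̄, J), w̄ = 3 wu / wl
    (kc : ℝ)
    (hkc : kc = sInf {t : ℝ | ∃ (θ : Fin 4 → ℝ) (γ : Fin p → ℝ),
        (∑ k ∈ Jᶜ, |γ k|) ≤ (3 * wu / wl) * ((∑ a, |θ a|) + ∑ k ∈ J, |γ k|) ∧
        ((∑ a, |θ a|) + ∑ k ∈ J, |γ k|) ≠ 0 ∧
        t = (J.card : ℝ) * ((1 / (n : ℝ)) * ∑ i, Kb K b (X i) *
              ((∑ a, Vvec b (X i) a * θ a) + ∑ k, Z i k * γ k) ^ 2) /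
            ((∑ a, |θ a|) + ∑ k ∈ J, |γ k|) ^ 2})
    (hkcpos : 0 < kc) :
    (1 / (n : ℝ)) * (∑ i, Kb K b (X i) *
        ((∑ a, Vvec b (X i) a * (θ₀ a - θt a)) + ∑ k, Z i k * (γ₀ k - γt k)) ^ 2) +
      wl * lam * ((∑ a, |θ₀ a - θt a|) + ∑ k, |γ₀ k - γt k|) ≤
    4 * lam ^ 2 * (J.card : ℝ) * wu ^ 2 / kc := by
  have hn' : (0:ℝ) < n := by exact_mod_cast hn
  have hKb0 : ∀ i, 0 ≤ Kb K b (X i) := fun i => div_nonneg (hK _) hb.le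
  have hres : ∀ i, Y i - (∑ a, Vvec b (X i) a * θt a) - (∑ k, Z i k * γt k)
      = r i + ((∑ a, Vvec b (X i) a * (θ₀ a - θt a)) + ∑ k, Z i k * (γ₀ k - γt k)) := by
    intro i
    rw [hr i]
    simp only [mul_sub, Finset.sum_sub_distrib]
    ring
  set Θ := ∑ a, |θ₀ a - θt a| with hΘd
  set Tall := ∑ k, |γ₀ k - γt k| with hTalld
  set TJ := ∑ k ∈ J, |γ₀ k - γt k| with hTJd
  set TC := ∑ k ∈ Jᶜ, |γ₀ k - γt k| with hTCd
  set WJ := ∑ k ∈ J, w k * |γ₀ k - γt k| with hWJd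
  set WC := ∑ k ∈ Jᶜ, w k * |γ₀ k - γt k| with hWCd
  set Qn := (1 / (n : ℝ)) * (∑ i, Kb K b (X i) *
      ((∑ a, Vvec b (X i) a * (θ₀ a - θt a)) + ∑ k, Z i k * (γ₀ k - γt k)) ^ 2) with hQnd
  set C := (1 / (n : ℝ)) * ∑ i, Kb K b (X i) *
      (r i * ((∑ a, Vvec b (X i) a * (θ₀ a - θt a)) + ∑ k, Z i k * (γ₀ k - γt k))) with hCd
  -- basic inequality from minimality
  have key : Qn + 2 * C ≤ lam * (∑ k, w k * |γ₀ k|) - lam * (∑ k, w k * |γt k|) := by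
    rw [hQnd, hCd]
    have h := hmin θ₀ γ₀
    simp only [← hr] at h
    have e : ∀ i ∈ (Finset.univ : Finset (Fin n)),
        Kb K b (X i) * (Y i - (∑ a, Vvec b (X i) a * θt a) - ∑ k, Z i k * γt k) ^ 2
        = Kb K b (X i) * r i ^ 2 + (2 * (Kb K b (X i) *
            (r i * ((∑ a, Vvec b (X i) a * (θ₀ a - θt a)) + ∑ k, Z i k * (γ₀ k - γt k))))
          + Kb K b (X i) *
            ((∑ a, Vvec b (X i) a * (θ₀ a - θt a)) + ∑ k, Z i k * (γ₀ k - γt k)) ^ 2) := by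
      intro i _
      rw [hres i]; ring
    rw [Finset.sum_congr rfl e, Finset.sum_add_distrib, Finset.sum_add_distrib,
      ← Finset.mul_sum] at h
    linarith
  -- swap sums in the cross term
  have hswap : (∑ i, Kb K b (X i) *
        (r i * ((∑ a, Vvec b (X i) a * (θ₀ a - θt a)) + ∑ k, Z i k * (γ₀ k - γt k))))
      = (∑ a, (∑ i, Vvec b (X i) a * Kb K b (X i) * r i) * (θ₀ a - θt a))
        + ∑ k, (∑ i, Kb K b (X i) * Z i k * r i) * (γ₀ k - γt k) := by
    have e : ∀ i ∈ (Finset.univ : Finset (Fin n)),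
        Kb K b (X i) * (r i * ((∑ a, Vvec b (X i) a * (θ₀ a - θt a)) + ∑ k, Z i k * (γ₀ k - γt k)))
        = (∑ a, Vvec b (X i) a * Kb K b (X i) * r i * (θ₀ a - θt a))
          + ∑ k, Kb K b (X i) * Z i k * r i * (γ₀ k - γt k) := by
      intro i _
      simp only [mul_add, Finset.mul_sum]
      congr 1
      · exact Finset.sum_congr rfl fun a _ => by ring
      · exact Finset.sum_congr rfl fun k _ => by ring
    rw [Finset.sum_congr rfl e, Finset.sum_add_distrib]
    congr 1
    · rw [Finset.sum_comm]
      exact Finset.sum_congr rfl fun a _ => (Finset.sum_mul _ _ _).symm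
    · rw [Finset.sum_comm]
      exact Finset.sum_congr rfl fun k _ => (Finset.sum_mul _ _ _).symm
  -- cross term lower bound
  have hClow : -(4 * C) ≤ lam * Θ + lam * (WJ + WC) := by
    rw [hCd, hΘd, hWJd, hWCd,
      Finset.sum_add_sum_compl J (fun k => w k * |γ₀ k - γt k|), hswap]
    have pA : -(4 * ((1 / (n:ℝ)) * ∑ a, (∑ i, Vvec b (X i) a * Kb K b (X i) * r i) * (θ₀ a - θt a)))
        ≤ lam * ∑ a, |θ₀ a - θt a| := by
      have step : ∀ a ∈ (Finset.univ : Finset (Fin 4)),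
          -(4 * ((1 / (n:ℝ)) * ((∑ i, Vvec b (X i) a * Kb K b (X i) * r i) * (θ₀ a - θt a))))
            ≤ lam * |θ₀ a - θt a| := by
        intro a _
        have h1 := hV a
        have h2 : |(1 / (n:ℝ)) * ∑ i, Vvec b (X i) a * Kb K b (X i) * r i| ≤ lam / 4 := by
          linarith
        have h3 : -(((1 / (n:ℝ)) * ∑ i, Vvec b (X i) a * Kb K b (X i) * r i) * (θ₀ a - θt a))
            ≤ |(1 / (n:ℝ)) * ∑ i, Vvec b (X i) a * Kb K b (X i) * r i| * |θ₀ a - θt a| := by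
          rw [← abs_mul]; exact neg_le_abs _
        have h4 := mul_le_mul_of_nonneg_right h2 (abs_nonneg (θ₀ a - θt a))
        linarith [h3, h4]
      calc -(4 * ((1 / (n:ℝ)) * ∑ a, (∑ i, Vvec b (X i) a * Kb K b (X i) * r i) * (θ₀ a - θt a)))
          = ∑ a, -(4 * ((1 / (n:ℝ)) * ((∑ i, Vvec b (X i) a * Kb K b (X i) * r i) * (θ₀ a - θt a)))) := by
            rw [Finset.mul_sum, Finset.mul_sum]
            exact (Finset.sum_neg_distrib _).symm
        _ ≤ ∑ a, lam * |θ₀ a - θt a| := Finset.sum_le_sum step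
        _ = lam * ∑ a, |θ₀ a - θt a| := (Finset.mul_sum _ _ _).symm
    have pK : -(4 * ((1 / (n:ℝ)) * ∑ k, (∑ i, Kb K b (X i) * Z i k * r i) * (γ₀ k - γt k)))
        ≤ lam * ∑ k, w k * |γ₀ k - γt k| := by
      have step : ∀ k ∈ (Finset.univ : Finset (Fin p)),
          -(4 * ((1 / (n:ℝ)) * ((∑ i, Kb K b (X i) * Z i k * r i) * (γ₀ k - γt k))))
            ≤ lam * (w k * |γ₀ k - γt k|) := by
        intro k _
        have hwk : (0:ℝ) < w k := lt_of_lt_of_le hwl (hw k).1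
        have h1 := hZ k
        have h1' : |(1 / (n:ℝ)) * ∑ i, (w k)⁻¹ * Kb K b (X i) * Z i k * r i| ≤ lam / 4 := by
          linarith
        have hsum : (∑ i, Kb K b (X i) * Z i k * r i)
            = w k * ∑ i, (w k)⁻¹ * Kb K b (X i) * Z i k * r i := by
          rw [Finset.mul_sum]
          exact Finset.sum_congr rfl fun i _ => by field_simp
        have heq : (1 / (n:ℝ)) * ∑ i, Kb K b (X i) * Z i k * r i
            = w k * ((1 / (n:ℝ)) * ∑ i, (w k)⁻¹ * Kb K b (X i) * Z i k * r i) := by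
          rw [hsum]; ring
        have h2 : |(1 / (n:ℝ)) * ∑ i, Kb K b (X i) * Z i k * r i| ≤ w k * (lam / 4) := by
          rw [heq, abs_mul, abs_of_pos hwk]
          exact mul_le_mul_of_nonneg_left h1' hwk.le
        have h3 : -(((1 / (n:ℝ)) * ∑ i, Kb K b (X i) * Z i k * r i) * (γ₀ k - γt k))
            ≤ |(1 / (n:ℝ)) * ∑ i, Kb K b (X i) * Z i k * r i| * |γ₀ k - γt k| := by
          rw [← abs_mul]; exact neg_le_abs _
        have h4 := mul_le_mul_of_nonneg_right h2 (abs_nonneg (γ₀ k - γt k))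
        linarith [h3, h4]
      calc -(4 * ((1 / (n:ℝ)) * ∑ k, (∑ i, Kb K b (X i) * Z i k * r i) * (γ₀ k - γt k)))
          = ∑ k, -(4 * ((1 / (n:ℝ)) * ((∑ i, Kb K b (X i) * Z i k * r i) * (γ₀ k - γt k)))) := by
            rw [Finset.mul_sum, Finset.mul_sum]
            exact (Finset.sum_neg_distrib _).symm
        _ ≤ ∑ k, lam * (w k * |γ₀ k - γt k|) := Finset.sum_le_sum step
        _ = lam * ∑ k, w k * |γ₀ k - γt k| := (Finset.mul_sum _ _ _).symm
    linarith [pA, pK]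
  -- penalty comparison
  have hC0 : (∑ k ∈ Jᶜ, w k * |γ₀ k|) = 0 := Finset.sum_eq_zero fun k hk => by
    rw [hsupp k (Finset.mem_compl.mp hk)]; simp
  have hCW : WC = ∑ k ∈ Jᶜ, w k * |γt k| := by
    rw [hWCd]
    exact Finset.sum_congr rfl fun k hk => by
      rw [hsupp k (Finset.mem_compl.mp hk), zero_sub, abs_neg]
  have hJpart : (∑ k ∈ J, w k * |γ₀ k|) - (∑ k ∈ J, w k * |γt k|) ≤ WJ := by
    rw [hWJd, ← Finset.sum_sub_distrib]
    refine Finset.sum_le_sum fun k _ => ?_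
    have h1 : |γ₀ k| - |γt k| ≤ |γ₀ k - γt k| := abs_sub_abs_le_abs_sub _ _
    have hw0 : (0:ℝ) ≤ w k := le_trans hwl.le (hw k).1
    linarith [mul_le_mul_of_nonneg_left h1 hw0]
  have hsplit0 : (∑ k, w k * |γ₀ k|) = (∑ k ∈ J, w k * |γ₀ k|) + ∑ k ∈ Jᶜ, w k * |γ₀ k| :=
    (Finset.sum_add_sum_compl J _).symm
  have hsplit1 : (∑ k, w k * |γt k|) = (∑ k ∈ J, w k * |γt k|) + ∑ k ∈ Jᶜ, w k * |γt k| :=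
    (Finset.sum_add_sum_compl J _).symm
  have hpen0 : (∑ k, w k * |γ₀ k|) - (∑ k, w k * |γt k|) ≤ WJ - WC := by
    rw [hsplit0, hsplit1, hC0, hCW]
    linarith [hJpart]
  have hpenl := mul_le_mul_of_nonneg_left hpen0 hlam.le
  have star : 2 * Qn + lam * WC ≤ lam * Θ + 3 * (lam * WJ) := by
    linarith [key, hClow, hpenl]
  -- replace weights by bounds
  have hWJw : WJ ≤ wu * TJ := by
    rw [hWJd, hTJd, Finset.mul_sum]
    exact Finset.sum_le_sum fun k _ => mul_le_mul_of_nonneg_right (hw k).2 (abs_nonneg _)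
  have hWCw : wl * TC ≤ WC := by
    rw [hWCd, hTCd, Finset.mul_sum]
    exact Finset.sum_le_sum fun k _ => mul_le_mul_of_nonneg_right (hw k).1 (abs_nonneg _)
  have star2 : 2 * Qn + lam * (wl * TC) ≤ lam * Θ + 3 * (lam * (wu * TJ)) := by
    have p1 := mul_le_mul_of_nonneg_left hWCw hlam.le
    have p2 := mul_le_mul_of_nonneg_left hWJw hlam.le
    linarith [star, p1, p2]
  -- nonnegativity
  have hΘ0 : 0 ≤ Θ := by rw [hΘd]; exact Finset.sum_nonneg fun _ _ => abs_nonneg _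
  have hTJ0 : 0 ≤ TJ := by rw [hTJd]; exact Finset.sum_nonneg fun _ _ => abs_nonneg _
  have hTC0 : 0 ≤ TC := by rw [hTCd]; exact Finset.sum_nonneg fun _ _ => abs_nonneg _
  have hQn0 : 0 ≤ Qn := by
    rw [hQnd]
    exact mul_nonneg (by positivity)
      (Finset.sum_nonneg fun i _ => mul_nonneg (hKb0 i) (sq_nonneg _))
  have hTallsplit : Tall = TJ + TC := by
    rw [hTalld, hTJd, hTCd]
    exact (Finset.sum_add_sum_compl J _).symm
  rw [hTallsplit]
  have hRHS0 : 0 ≤ 4 * lam ^ 2 * (J.card : ℝ) * wu ^ 2 / kc :=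
    div_nonneg (by positivity) hkcpos.le
  by_cases hS : Θ + TJ = 0
  · have hΘz : Θ = 0 := by linarith
    have hTJz : TJ = 0 := by linarith
    rw [hΘz, hTJz] at star2 ⊢
    linarith [star2]
  · have hSpos : 0 < Θ + TJ := lt_of_le_of_ne (by linarith) (Ne.symm hS)
    -- bounded below
    have hbdd : BddBelow {t : ℝ | ∃ (θ : Fin 4 → ℝ) (γ : Fin p → ℝ),
        (∑ k ∈ Jᶜ, |γ k|) ≤ (3 * wu / wl) * ((∑ a, |θ a|) + ∑ k ∈ J, |γ k|) ∧
        ((∑ a, |θ a|) + ∑ k ∈ J, |γ k|) ≠ 0 ∧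
        t = (J.card : ℝ) * ((1 / (n : ℝ)) * ∑ i, Kb K b (X i) *
              ((∑ a, Vvec b (X i) a * θ a) + ∑ k, Z i k * γ k) ^ 2) /
            ((∑ a, |θ a|) + ∑ k ∈ J, |γ k|) ^ 2} := by
      refine ⟨0, fun t ht => ?_⟩
      obtain ⟨θ, γ, -, -, rfl⟩ := ht
      have hs : 0 ≤ ∑ i, Kb K b (X i) *
          ((∑ a, Vvec b (X i) a * θ a) + ∑ k, Z i k * γ k) ^ 2 :=
        Finset.sum_nonneg fun i _ => mul_nonneg (hKb0 i) (sq_nonneg _)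
      exact div_nonneg (mul_nonneg (Nat.cast_nonneg _)
        (mul_nonneg (by positivity) hs)) (sq_nonneg _)
    have hmem : kc ≤ (J.card : ℝ) * Qn / (Θ + TJ) ^ 2 := by
      rw [hkc, hQnd, hΘd, hTJd]
      refine csInf_le hbdd ⟨fun a => θ₀ a - θt a, fun k => γ₀ k - γt k, ?_, ?_, ?_⟩
      · show (∑ k ∈ Jᶜ, |γ₀ k - γt k|)
            ≤ (3 * wu / wl) * ((∑ a, |θ₀ a - θt a|) + ∑ k ∈ J, |γ₀ k - γt k|)
        rw [← hΘd, ← hTJd, ← hTCd, div_mul_eq_mul_div, le_div_iff₀ hwl]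
        nlinarith [star2, hQn0, hΘ0, hTJ0, hTC0, hlam,
          mul_nonneg (mul_nonneg hlam.le hΘ0) (show (0:ℝ) ≤ 3 * wu - 1 by linarith)]
      · show ((∑ a, |θ₀ a - θt a|) + ∑ k ∈ J, |γ₀ k - γt k|) ≠ 0
        rw [← hΘd, ← hTJd]; exact hS
      · rfl
    have hS2 : (0:ℝ) < (Θ + TJ) ^ 2 := pow_pos hSpos 2
    have hcomp : kc * (Θ + TJ) ^ 2 ≤ (J.card : ℝ) * Qn := (le_div_iff₀ hS2).mp hmem
    have hcard : (1:ℝ) ≤ (J.card : ℝ) := by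
      rcases Nat.eq_zero_or_pos J.card with h0 | h1
      · exfalso
        rw [h0] at hcomp
        simp only [Nat.cast_zero, zero_mul] at hcomp
        nlinarith [mul_pos hkcpos hS2]
      · exact_mod_cast h1
    have hcardpos : (0:ℝ) < (J.card : ℝ) := by linarith
    have h1 : 2 * Qn + lam * (wl * (Θ + (TJ + TC))) ≤ 4 * (lam * (wu * (Θ + TJ))) := by
      nlinarith [star2,
        mul_nonneg (mul_nonneg hlam.le hΘ0) (show (0:ℝ) ≤ 4 * wu - 1 - wl by linarith),
        mul_nonneg (mul_nonneg hlam.le hTJ0) (show (0:ℝ) ≤ wu - wl by linarith)]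
    rw [le_div_iff₀ hkcpos]
    refine le_of_mul_le_mul_right ?_ hcardpos
    have h1' : Qn + wl * lam * (Θ + (TJ + TC)) ≤ 4 * (lam * (wu * (Θ + TJ))) - Qn := by
      linarith [h1]
    have h1kc := mul_le_mul_of_nonneg_right
      (mul_le_mul_of_nonneg_right h1' hkcpos.le) hcardpos.le
    have hcomp2 := mul_le_mul_of_nonneg_right hcomp hkcpos.le
    have hsq := sq_nonneg (kc * (Θ + TJ) - 2 * lam * wu * (J.card : ℝ))
    linarith [h1kc, hcomp2, hsq]

end
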